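/- arXiv:2102.07516 — 4 statements merged into one kernel-verified Lean document; each statement's English description precedes it below -/
import Mathlib

section
/- Let h > 0, let D : ℤ → ℝ be as above, and let G(x) = (sign x / 2)·sinh x. Then for every integer β, ∑_{γ ∈ ℤ} D(β − γ)·G(hγ) = δ_{β,0}, where δ_{β,0} = 1 if β = 0 and 0 otherwise. -/
/-- Discrete analogue of the differential operator d²/dx² − 1. -/
noncomputable def D (h : ℝ) (β : ℤ) : ℝ :=
  if β = 0 then 2 * (1 + Real.exp (2 * h)) / (1 - Real.exp (2 * h))
  else if β.natAbs = 1 then -2 * Real.exp h / (1 - Real.exp (2 * h))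
  else 0

/-- Fundamental solution `G(x) = (sign x / 2) sinh x`. -/
noncomputable def G (x : ℝ) : ℝ := Real.sign x / 2 * Real.sinh x

lemma G_abs (x : ℝ) : G x = Real.sinh |x| / 2 := by
  unfold G
  rcases lt_trichotomy x 0 with h|h|h
  · rw [Real.sign_of_neg h, abs_of_neg h, Real.sinh_neg]; ring
  · simp [h]
  · rw [Real.sign_of_pos h, abs_of_pos h]; ring

lemma D_zero (h : ℝ) {n : ℤ} (h0 : n ≠ 0) (h1 : n ≠ 1) (h2 : n ≠ -1) : D h n = 0 := by
  unfold D
  rw [if_neg h0, if_neg (by omega)]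

lemma key (h : ℝ) (hh : 0 < h) :
    2 * (1 + Real.exp (2 * h)) / (1 - Real.exp (2 * h)) / 2 +
      (-2 * Real.exp h / (1 - Real.exp (2 * h))) * Real.cosh h = 0 := by
  have hnum : 2 * (1 + Real.exp (2 * h)) / 2 + (-2 * Real.exp h) * Real.cosh h = 0 := by
    rw [Real.cosh_eq, Real.exp_neg,
      show Real.exp (2 * h) = Real.exp h * Real.exp h by rw [two_mul, Real.exp_add]]
    have he : Real.exp h ≠ 0 := Real.exp_ne_zero h
    field_simp
    ring
  have heq : 2 * (1 + Real.exp (2 * h)) / (1 - Real.exp (2 * h)) / 2 +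
      (-2 * Real.exp h / (1 - Real.exp (2 * h))) * Real.cosh h
      = (2 * (1 + Real.exp (2 * h)) / 2 + (-2 * Real.exp h) * Real.cosh h)
        / (1 - Real.exp (2 * h)) := by ring
  rw [heq, hnum, zero_div]

theorem D_conv_G (h : ℝ) (hh : 0 < h) (β : ℤ) :
    ∑' γ : ℤ, D h (β - γ) * G (h * γ) = if β = 0 then 1 else 0 := by
  have hne : 1 - Real.exp (2 * h) ≠ 0 := by
    nlinarith [Real.add_one_le_exp (2 * h)]
  have hsum : ∑' γ : ℤ, D h (β - γ) * G (h * γ)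
      = ∑ γ ∈ ({β - 1, β, β + 1} : Finset ℤ), D h (β - γ) * G (h * γ) := by
    apply tsum_eq_sum
    intro b hb
    simp only [Finset.mem_insert, Finset.mem_singleton] at hb
    push_neg at hb
    rw [D_zero h (by omega) (by omega) (by omega), zero_mul]
  rw [hsum]
  rw [show ({β - 1, β, β + 1} : Finset ℤ) = {β - 1} ∪ {β} ∪ {β + 1} by
    ext x; simp [Finset.mem_insert]]
  rw [Finset.sum_union (by simp; omega), Finset.sum_union (by simp)]
  simp only [Finset.sum_singleton]
  rw [show β - (β - 1) = 1 by ring, show β - β = 0 by ring, show β - (β + 1) = -1 by ring]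
  have hD0 : D h 0 = 2 * (1 + Real.exp (2 * h)) / (1 - Real.exp (2 * h)) := by
    unfold D; norm_num
  have hD1 : D h 1 = -2 * Real.exp h / (1 - Real.exp (2 * h)) := by
    unfold D; norm_num
  have hDm1 : D h (-1) = -2 * Real.exp h / (1 - Real.exp (2 * h)) := by
    unfold D; norm_num
  rw [hD0, hD1, hDm1]
  rcases lt_trichotomy β 0 with hb | hb | hb
  · rw [if_neg (by omega)]
    have habs : ∀ γ : ℤ, γ ≤ 0 → G (h * γ) = -Real.sinh (h * γ) / 2 := by
      intro γ hγ
      rw [G_abs, abs_of_nonpos (by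
        apply mul_nonpos_of_nonneg_of_nonpos hh.le
        exact_mod_cast hγ), Real.sinh_neg]
    rw [habs _ (by omega), habs _ (by omega), habs _ (by omega)]
    push_cast
    rw [show h * ((β : ℝ) - 1) = h * β - h by ring,
        show h * ((β : ℝ) + 1) = h * β + h by ring,
        Real.sinh_sub, Real.sinh_add]
    linear_combination (-Real.sinh (h * (β : ℝ))) * key h hh
  · subst hb
    simp only [if_pos rfl]
    rw [show ((0 : ℤ) : ℝ) = (0 : ℝ) by norm_num]
    have h1 : G (h * ((0 : ℤ) - 1 : ℤ)) = Real.sinh h / 2 := by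
      rw [G_abs]; push_cast
      rw [show h * (-1 : ℝ) = -h by ring, abs_of_nonpos (by linarith : -h ≤ 0), neg_neg]
    have h2 : G (h * ((0 : ℤ) : ℝ)) = 0 := by simp [G]
    have h3 : G (h * ((0 : ℤ) + 1 : ℤ)) = Real.sinh h / 2 := by
      rw [G_abs]; push_cast
      rw [show h * (1 : ℝ) = h by ring, abs_of_pos hh]
    push_cast at h1 h2 h3 ⊢
    rw [h1, h2, h3, Real.sinh_eq, Real.exp_neg]
    have he : Real.exp h ≠ 0 := Real.exp_ne_zero h
    rw [two_mul, Real.exp_add] at hne ⊢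
    have hne' : 1 - Real.exp h ^ 2 ≠ 0 := by rw [sq]; exact hne
    field_simp
    ring
  · rw [if_neg (by omega)]
    have habs : ∀ γ : ℤ, 0 ≤ γ → G (h * γ) = Real.sinh (h * γ) / 2 := by
      intro γ hγ
      rw [G_abs, abs_of_nonneg (by
        apply mul_nonneg hh.le
        exact_mod_cast hγ)]
    rw [habs _ (by omega), habs _ (by omega), habs _ (by omega)]
    push_cast
    rw [show h * ((β : ℝ) - 1) = h * β - h by ring,
        show h * ((β : ℝ) + 1) = h * β + h by ring,
        Real.sinh_sub, Real.sinh_add]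
    linear_combination (Real.sinh (h * (β : ℝ))) * key h hh
end

section
/- For every h > 0 and every ω ∈ ℝ, the quantity E(h, ω) = (1/(4π²ω² + 1)²)·(4π²ω² + 1 − 2(1 + e^{2h} − 2e^{h}cos(2πωh))/(h(e^{2h} − 1))) is nonnegative. -/
/-!
With `a = 2πω`, `1 + e^{2h} - 2e^h cos(ah) = 2e^h (cosh h - cos(ah))` and
`e^{2h} - 1 = 2e^h sinh h`, so the second factor is nonnegative as soon as
`2 (cosh h - cos(ah)) ≤ (a² + 1) h sinh h`. This splits into
`2 (cosh h - 1) ≤ h sinh h` (i.e. `tanh (h/2) ≤ h/2`) and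
`2 (1 - cos(ah)) ≤ a² h² ≤ a² h sinh h`.
-/

open Real

theorem sinh_le_mul_cosh {x : ℝ} (hx : 0 ≤ x) : sinh x ≤ x * cosh x := by
  have hmono : MonotoneOn (fun t : ℝ => t * cosh t - sinh t) (Set.Ici 0) := by
    refine monotoneOn_of_hasDerivWithinAt_nonneg (f' := fun t => t * sinh t) (convex_Ici 0)
      (by fun_prop) (fun t _ => ?_) (fun t ht => ?_)
    · have hderiv := ((hasDerivAt_id t).mul (hasDerivAt_cosh t)).sub (hasDerivAt_sinh t)
      exact (hderiv.congr_deriv (by simp)).hasDerivWithinAt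
    · rw [interior_Ici] at ht
      exact mul_nonneg ht.le (sinh_nonneg_iff.2 ht.le)
  simpa using hmono Set.self_mem_Ici hx hx

theorem two_mul_cosh_sub_one_le_mul_sinh {x : ℝ} (hx : 0 ≤ x) : 2 * (cosh x - 1) ≤ x * sinh x := by
  obtain ⟨y, rfl⟩ : ∃ y, x = 2 * y := ⟨x / 2, by ring⟩
  have hy : 0 ≤ y := by linarith
  have hsinh := mul_le_mul_of_nonneg_left (sinh_le_mul_cosh hy) (sinh_nonneg_iff.2 hy)
  rw [cosh_two_mul, sinh_two_mul, cosh_sq]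
  nlinarith

theorem sq_le_mul_sinh {x : ℝ} (hx : 0 ≤ x) : x ^ 2 ≤ x * sinh x := by
  rw [sq]
  exact mul_le_mul_of_nonneg_left (self_le_sinh_iff.2 hx) hx

theorem two_mul_cosh_sub_cos_mul_le (a : ℝ) {x : ℝ} (hx : 0 ≤ x) :
    2 * (cosh x - cos (a * x)) ≤ (a ^ 2 + 1) * (x * sinh x) := by
  have hcosh := two_mul_cosh_sub_one_le_mul_sinh hx
  have hcos : 1 - (a * x) ^ 2 / 2 ≤ cos (a * x) := one_sub_sq_div_two_le_cos
  have hsq := mul_le_mul_of_nonneg_left (sq_le_mul_sinh hx) (sq_nonneg a)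
  rw [mul_pow] at hcos
  linarith

theorem one_add_exp_two_mul_sub_two_mul_exp_mul (x t : ℝ) :
    1 + exp (2 * x) - 2 * exp x * t = 2 * exp x * (cosh x - t) := by
  rw [cosh_eq, exp_neg, two_mul x, exp_add]
  field_simp
  ring

theorem exp_two_mul_sub_one (x : ℝ) : exp (2 * x) - 1 = 2 * exp x * sinh x := by
  rw [sinh_eq, exp_neg, two_mul x, exp_add]
  field_simp

theorem two_mul_one_add_exp_two_mul_sub_le (a : ℝ) {x : ℝ} (hx : 0 ≤ x) :
    2 * (1 + exp (2 * x) - 2 * exp x * cos (a * x)) ≤ (a ^ 2 + 1) * (x * (exp (2 * x) - 1)) := by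
  rw [one_add_exp_two_mul_sub_two_mul_exp_mul, exp_two_mul_sub_one]
  calc 2 * (2 * exp x * (cosh x - cos (a * x)))
      = 2 * exp x * (2 * (cosh x - cos (a * x))) := by ring
    _ ≤ 2 * exp x * ((a ^ 2 + 1) * (x * sinh x)) :=
      mul_le_mul_of_nonneg_left (two_mul_cosh_sub_cos_mul_le a hx) (by positivity)
    _ = (a ^ 2 + 1) * (x * (2 * exp x * sinh x)) := by ring

theorem error_norm_sq_nonneg (h ω : ℝ) (hh : 0 < h) :
    0 ≤ (1 / (4 * Real.pi ^ 2 * ω ^ 2 + 1) ^ 2) *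
        (4 * Real.pi ^ 2 * ω ^ 2 + 1 -
          2 * (1 + Real.exp (2 * h) - 2 * Real.exp h * Real.cos (2 * Real.pi * ω * h))
            / (h * (Real.exp (2 * h) - 1))) := by
  have hden : 0 < h * (exp (2 * h) - 1) := by
    rw [exp_two_mul_sub_one]
    have := sinh_pos_iff.2 hh
    positivity
  have hbound := two_mul_one_add_exp_two_mul_sub_le (2 * π * ω) hh.le
  rw [show (2 * π * ω) ^ 2 = 4 * π ^ 2 * ω ^ 2 by ring] at hbound
  refine mul_nonneg (by positivity) ?_
  rw [sub_nonneg, div_le_iff₀ hden]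
  exact hbound
end

section
/- Fix ω ∈ ℝ. Then as h → 0⁺, (4π²ω² + 1)²·E(h, ω) = 4π²ω² + 1 − 2(1 + e^{2h} − 2e^{h}cos(2πωh))/(h(e^{2h} − 1)) satisfies E(h, ω) = h²/12 − (4π²ω² + 3)h⁴/360 + O(h⁶). -/
open Filter Asymptotics

noncomputable def TP1 (h : ℝ) : ℝ :=
  1 + h + h^2/2 + h^3/6 + h^4/24 + h^5/120 + h^6/720 + h^7/5040

noncomputable def TP2 (h : ℝ) : ℝ :=
  1 + 2*h + (2*h)^2/2 + (2*h)^3/6 + (2*h)^4/24 + (2*h)^5/120 + (2*h)^6/720 + (2*h)^7/5040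

noncomputable def TQc (b h : ℝ) : ℝ := 1 - (b*h)^2/2 + (b*h)^4/24 - (b*h)^6/720

noncomputable def TQp (b h : ℝ) : ℝ :=
  (1/70 + 31/7560*b^2 + 7/2160*b^4 + 1/1080*b^6)
  + (-1/540 - 17/7560*b^2 + 7/2160*b^4 + 1/1080*b^6)*h
  + (1/9450 + 1/1050*b^2 + 11/6048*b^4 + 11/21600*b^6)*h^2
  + (1/1350 + 7/4050*b^2 + 23/18144*b^4 + 13/64800*b^6)*h^3
  + (1/4725 + 1/2025*b^2 + 1/2835*b^4 + 19/302400*b^6)*h^4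
  + (-1/907200*b^6)*h^5

lemma contTP1 : Continuous TP1 := by unfold TP1; continuity
lemma contTQc (b : ℝ) : Continuous (TQc b) := by unfold TQc; continuity
lemma contTQp (b : ℝ) : Continuous (TQp b) := by unfold TQp; continuity

lemma key_decomp (b A h E1 E2 C : ℝ) (hA : A = b^2+1) :
    A*h*(E2-1) - 2*(1 + E2 - 2*E1*C) - A^2*(h^2/12 - (A+2)*h^4/360)*h*(E2-1)
    = h^8 * TQp b h
      + (A*h - 2 - A^2*(h^2/12 - (A+2)*h^4/360)*h) * (E2 - TP2 h)
      + 4*(TP1 h * (C - TQc b h) + (E1 - TP1 h) * TQc b h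
            + (E1 - TP1 h) * (C - TQc b h)) := by
  subst hA
  simp only [TQp, TP2, TP1, TQc]
  ring

lemma exp_taylor8 (c : ℝ) :
    (fun h : ℝ => Real.exp (c*h) - (1 + c*h + (c*h)^2/2 + (c*h)^3/6 + (c*h)^4/24
      + (c*h)^5/120 + (c*h)^6/720 + (c*h)^7/5040))
      =O[nhdsWithin 0 (Set.Ioi 0)] (fun h : ℝ => h ^ 8) := by
  refine IsBigO.of_bound ((|c|+1)^8) ?_
  have hpos : (0:ℝ) < (|c|+1)⁻¹ := by positivity
  filter_upwards [Ioo_mem_nhdsGT_of_mem ⟨le_refl (0:ℝ), hpos⟩] with h hh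
  obtain ⟨h0, hlt⟩ := hh
  have hc1 : (0:ℝ) < |c| + 1 := by positivity
  have hch : |c*h| ≤ 1 := by
    rw [abs_mul, abs_of_pos h0]
    calc |c| * h ≤ (|c|+1) * h := by nlinarith [abs_nonneg c]
      _ ≤ (|c|+1) * (|c|+1)⁻¹ := by nlinarith
      _ = 1 := mul_inv_cancel₀ (ne_of_gt hc1)
  have hb := Real.exp_bound hch (n := 8) (by norm_num)
  have hsum : (∑ m ∈ Finset.range 8, (c*h)^m / (m.factorial : ℝ))
      = 1 + c*h + (c*h)^2/2 + (c*h)^3/6 + (c*h)^4/24 + (c*h)^5/120 + (c*h)^6/720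
        + (c*h)^7/5040 := by
    norm_num [Finset.sum_range_succ, Nat.factorial]
  rw [hsum] at hb
  have h8 : |c*h|^8 ≤ (|c|+1)^8 * h^8 := by
    rw [abs_mul, abs_of_pos h0, mul_pow]
    gcongr
    · linarith [abs_nonneg c]
  have hpow : (0:ℝ) ≤ |c*h|^8 := by positivity
  have hK : ((8:ℕ).succ : ℝ) / ((8:ℕ).factorial * 8) ≤ 1 := by norm_num [Nat.factorial]
  simp only [Real.norm_eq_abs]
  rw [abs_of_pos (pow_pos h0 8)]
  calc |Real.exp (c*h) - _| ≤ |c*h|^8 * (((8:ℕ).succ : ℝ) / ((8:ℕ).factorial * 8)) := hb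
    _ ≤ |c*h|^8 * 1 := by nlinarith
    _ ≤ (|c|+1)^8 * h^8 := by rw [mul_one]; exact h8

lemma cos_taylor8 (c : ℝ) :
    (fun h : ℝ => Real.cos (c*h) - (1 - (c*h)^2/2 + (c*h)^4/24 - (c*h)^6/720))
      =O[nhdsWithin 0 (Set.Ioi 0)] (fun h : ℝ => h ^ 8) := by
  refine IsBigO.of_bound ((|c|+1)^8) ?_
  have hpos : (0:ℝ) < (|c|+1)⁻¹ := by positivity
  filter_upwards [Ioo_mem_nhdsGT_of_mem ⟨le_refl (0:ℝ), hpos⟩] with h hh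
  obtain ⟨h0, hlt⟩ := hh
  have hc1 : (0:ℝ) < |c| + 1 := by positivity
  have hch : |c*h| ≤ 1 := by
    rw [abs_mul, abs_of_pos h0]
    calc |c| * h ≤ (|c|+1) * h := by nlinarith [abs_nonneg c]
      _ ≤ (|c|+1) * (|c|+1)⁻¹ := by nlinarith
      _ = 1 := mul_inv_cancel₀ (ne_of_gt hc1)
  have habs : ‖(((c*h : ℝ) : ℂ) * Complex.I)‖ ≤ 1 := by
    simpa [Complex.norm_real, ← abs_mul] using hch
  have hb := Complex.exp_bound habs (n := 8) (by norm_num)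
  have hre : (∑ m ∈ Finset.range 8, (((c*h:ℝ):ℂ)*Complex.I)^m / m.factorial).re
      = 1 - (c*h)^2/2 + (c*h)^4/24 - (c*h)^6/720 := by
    norm_num [Finset.sum_range_succ, mul_pow, Complex.I_sq, pow_succ, Nat.factorial]
    ring
  have hcos : Real.cos (c*h) = (Complex.exp (((c*h:ℝ):ℂ) * Complex.I)).re :=
    (Complex.exp_ofReal_mul_I_re _).symm
  have key : |Real.cos (c*h) - (1 - (c*h)^2/2 + (c*h)^4/24 - (c*h)^6/720)|
      ≤ ‖(Complex.exp (((c*h:ℝ):ℂ)*Complex.I)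
          - ∑ m ∈ Finset.range 8, (((c*h:ℝ):ℂ)*Complex.I)^m / m.factorial)‖ := by
    rw [hcos, ← hre]
    calc |(Complex.exp (((c*h:ℝ):ℂ)*Complex.I)).re - (∑ m ∈ Finset.range 8,
            (((c*h:ℝ):ℂ)*Complex.I)^m / m.factorial).re|
        = |(Complex.exp (((c*h:ℝ):ℂ)*Complex.I) - ∑ m ∈ Finset.range 8,
            (((c*h:ℝ):ℂ)*Complex.I)^m / m.factorial).re| := by rw [Complex.sub_re]
      _ ≤ _ := Complex.abs_re_le_norm _
  have habs' : ‖(((c*h : ℝ) : ℂ) * Complex.I)‖ = |c*h| := by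
    simp [Complex.norm_real, ← abs_mul]
  rw [habs'] at hb
  have h8 : |c*h|^8 ≤ (|c|+1)^8 * h^8 := by
    rw [abs_mul, abs_of_pos h0, mul_pow]
    gcongr
    · linarith [abs_nonneg c]
  have hK : ((8:ℕ).succ : ℝ) * (((8:ℕ).factorial : ℝ) * 8)⁻¹ ≤ 1 := by
    norm_num [Nat.factorial]
  simp only [Real.norm_eq_abs]
  rw [abs_of_pos (pow_pos h0 8)]
  have hpow : (0:ℝ) ≤ |c*h|^8 := by positivity
  calc |Real.cos (c*h) - _| ≤ _ := key
    _ ≤ |c*h|^8 * (((8:ℕ).succ : ℝ) * (((8:ℕ).factorial : ℝ) * 8)⁻¹) := hb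
    _ ≤ |c*h|^8 * 1 := by nlinarith
    _ ≤ (|c|+1)^8 * h^8 := by rw [mul_one]; exact h8

theorem error_norm_sq_asymptotic (ω : ℝ) :
    (fun h : ℝ =>
        (1 / (4 * Real.pi ^ 2 * ω ^ 2 + 1) ^ 2) *
          (4 * Real.pi ^ 2 * ω ^ 2 + 1 -
            2 * (1 + Real.exp (2 * h) - 2 * Real.exp h * Real.cos (2 * Real.pi * ω * h))
              / (h * (Real.exp (2 * h) - 1)))
        - (h ^ 2 / 12 - (4 * Real.pi ^ 2 * ω ^ 2 + 3) * h ^ 4 / 360))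
      =O[nhdsWithin 0 (Set.Ioi 0)] (fun h : ℝ => h ^ 6) := by
  have hApos : (0:ℝ) < 4*Real.pi^2*ω^2+1 := by positivity
  have hR2 : (fun h : ℝ => Real.exp (2*h) - TP2 h)
      =O[nhdsWithin 0 (Set.Ioi 0)] (fun h : ℝ => h^8) := by
    simpa only [TP2] using exp_taylor8 2
  have hR1 : (fun h : ℝ => Real.exp h - TP1 h)
      =O[nhdsWithin 0 (Set.Ioi 0)] (fun h : ℝ => h^8) := by
    have := exp_taylor8 1
    simp only [one_mul] at this
    simpa only [TP1] using this
  have hRc : (fun h : ℝ => Real.cos (2*Real.pi*ω*h) - TQc (2*Real.pi*ω) h)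
      =O[nhdsWithin 0 (Set.Ioi 0)] (fun h : ℝ => h^8) := by
    simpa only [TQc] using cos_taylor8 (2*Real.pi*ω)
  have hO1 : ∀ g : ℝ → ℝ, Continuous g →
      g =O[nhdsWithin 0 (Set.Ioi 0)] (fun _ : ℝ => (1:ℝ)) :=
    fun g hg => ((hg.tendsto 0).mono_left nhdsWithin_le_nhds).isBigO_one ℝ
  have hh16 : (fun h : ℝ => h^8 * h^8) =O[nhdsWithin 0 (Set.Ioi 0)] (fun h : ℝ => h^8) := by
    refine IsBigO.of_bound 1 ?_
    filter_upwards [Ioo_mem_nhdsGT_of_mem ⟨le_refl (0:ℝ), one_pos⟩] with h hh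
    obtain ⟨h0, h1⟩ := hh
    have hp : h^8 ≤ 1 := pow_le_one₀ h0.le h1.le
    have hp8 : (0:ℝ) < h^8 := pow_pos h0 8
    simp only [Real.norm_eq_abs, one_mul]
    rw [abs_of_pos (by positivity), abs_of_pos hp8]
    nlinarith
  have hT1 : (fun h : ℝ => h^8 * TQp (2*Real.pi*ω) h)
      =O[nhdsWithin 0 (Set.Ioi 0)] (fun h : ℝ => h^8) := by
    simpa using (isBigO_refl (fun h : ℝ => h^8) (nhdsWithin 0 (Set.Ioi 0))).mul
      (hO1 (TQp (2*Real.pi*ω)) (contTQp _))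
  have hScont : Continuous (fun h : ℝ => (4*Real.pi^2*ω^2+1)*h - 2
      - (4*Real.pi^2*ω^2+1)^2*(h^2/12 - (4*Real.pi^2*ω^2+1+2)*h^4/360)*h) := by continuity
  have hT2 : (fun h : ℝ => ((4*Real.pi^2*ω^2+1)*h - 2
      - (4*Real.pi^2*ω^2+1)^2*(h^2/12 - (4*Real.pi^2*ω^2+1+2)*h^4/360)*h)
      * (Real.exp (2*h) - TP2 h)) =O[nhdsWithin 0 (Set.Ioi 0)] (fun h : ℝ => h^8) := by
    simpa using (hO1 _ hScont).mul hR2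
  have h31 : (fun h : ℝ => TP1 h * (Real.cos (2*Real.pi*ω*h) - TQc (2*Real.pi*ω) h))
      =O[nhdsWithin 0 (Set.Ioi 0)] (fun h : ℝ => h^8) := by
    simpa using (hO1 TP1 contTP1).mul hRc
  have h32 : (fun h : ℝ => (Real.exp h - TP1 h) * TQc (2*Real.pi*ω) h)
      =O[nhdsWithin 0 (Set.Ioi 0)] (fun h : ℝ => h^8) := by
    simpa using hR1.mul (hO1 (TQc (2*Real.pi*ω)) (contTQc _))
  have h33 : (fun h : ℝ => (Real.exp h - TP1 h)
      * (Real.cos (2*Real.pi*ω*h) - TQc (2*Real.pi*ω) h))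
      =O[nhdsWithin 0 (Set.Ioi 0)] (fun h : ℝ => h^8) := (hR1.mul hRc).trans hh16
  have hT3 : (fun h : ℝ => 4*(TP1 h * (Real.cos (2*Real.pi*ω*h) - TQc (2*Real.pi*ω) h)
      + (Real.exp h - TP1 h) * TQc (2*Real.pi*ω) h
      + (Real.exp h - TP1 h) * (Real.cos (2*Real.pi*ω*h) - TQc (2*Real.pi*ω) h)))
      =O[nhdsWithin 0 (Set.Ioi 0)] (fun h : ℝ => h^8) := by
    simpa using ((h31.add h32).add h33).const_mul_left 4
  have hNsum : (fun h : ℝ => h^8 * TQp (2*Real.pi*ω) h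
      + ((4*Real.pi^2*ω^2+1)*h - 2
        - (4*Real.pi^2*ω^2+1)^2*(h^2/12 - (4*Real.pi^2*ω^2+1+2)*h^4/360)*h)
        * (Real.exp (2*h) - TP2 h)
      + 4*(TP1 h * (Real.cos (2*Real.pi*ω*h) - TQc (2*Real.pi*ω) h)
          + (Real.exp h - TP1 h) * TQc (2*Real.pi*ω) h
          + (Real.exp h - TP1 h) * (Real.cos (2*Real.pi*ω*h) - TQc (2*Real.pi*ω) h)))
      =O[nhdsWithin 0 (Set.Ioi 0)] (fun h : ℝ => h^8) := (hT1.add hT2).add hT3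
  obtain ⟨Cb, hCb⟩ := hNsum.bound
  rw [isBigO_iff]
  refine ⟨Cb / (2*(4*Real.pi^2*ω^2+1)^2), ?_⟩
  filter_upwards [hCb, self_mem_nhdsWithin] with h hNh hmem
  have h0 : 0 < h := hmem
  have hE : 0 < Real.exp (2*h) - 1 :=
    sub_pos.2 (Real.one_lt_exp_iff.2 (by linarith))
  have hDpos : 0 < (4*Real.pi^2*ω^2+1)^2 * h * (Real.exp (2*h) - 1) := by positivity
  set NN : ℝ := h^8 * TQp (2*Real.pi*ω) h
      + ((4*Real.pi^2*ω^2+1)*h - 2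
        - (4*Real.pi^2*ω^2+1)^2*(h^2/12 - (4*Real.pi^2*ω^2+1+2)*h^4/360)*h)
        * (Real.exp (2*h) - TP2 h)
      + 4*(TP1 h * (Real.cos (2*Real.pi*ω*h) - TQc (2*Real.pi*ω) h)
          + (Real.exp h - TP1 h) * TQc (2*Real.pi*ω) h
          + (Real.exp h - TP1 h) * (Real.cos (2*Real.pi*ω*h) - TQc (2*Real.pi*ω) h))
      with hNNdef
  have hfe : (1 / (4 * Real.pi ^ 2 * ω ^ 2 + 1) ^ 2) *
          (4 * Real.pi ^ 2 * ω ^ 2 + 1 -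
            2 * (1 + Real.exp (2 * h) - 2 * Real.exp h * Real.cos (2 * Real.pi * ω * h))
              / (h * (Real.exp (2 * h) - 1)))
        - (h ^ 2 / 12 - (4 * Real.pi ^ 2 * ω ^ 2 + 3) * h ^ 4 / 360)
      = NN / ((4*Real.pi^2*ω^2+1)^2 * h * (Real.exp (2*h) - 1)) := by
    rw [eq_div_iff (ne_of_gt hDpos), hNNdef,
      ← key_decomp (2*Real.pi*ω) (4*Real.pi^2*ω^2+1) h (Real.exp h) (Real.exp (2*h))
        (Real.cos (2*Real.pi*ω*h)) (by ring)]
    field_simp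
    ring
  have hnum : |NN| ≤ Cb * h^8 := by
    rw [Real.norm_eq_abs, Real.norm_eq_abs, abs_of_pos (pow_pos h0 8)] at hNh
    exact hNh
  have hCb0 : 0 ≤ Cb * h^8 := le_trans (abs_nonneg _) hnum
  have h2h : 2*h ≤ Real.exp (2*h) - 1 := by linarith [Real.add_one_le_exp (2*h)]
  have hD : (4*Real.pi^2*ω^2+1)^2*h*(2*h) ≤ (4*Real.pi^2*ω^2+1)^2*h*(Real.exp (2*h)-1) := by
    exact mul_le_mul_of_nonneg_left h2h (by positivity)
  simp only [Real.norm_eq_abs]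
  rw [hfe, abs_div, abs_of_pos hDpos, abs_of_pos (pow_pos h0 6)]
  calc |NN| / ((4*Real.pi^2*ω^2+1)^2 * h * (Real.exp (2*h) - 1))
      ≤ (Cb * h^8) / ((4*Real.pi^2*ω^2+1)^2*h*(2*h)) :=
        div_le_div₀ hCb0 hnum (by positivity) hD
    _ = Cb / (2*(4*Real.pi^2*ω^2+1)^2) * h^6 := by
        field_simp
end

section
/- Fix ω ∈ ℝ. Then E(h, ω) = (1/(4π²ω² + 1)²)·(4π²ω² + 1 − 2(1 + e^{2h} − 2e^{h}cos(2πωh))/(h(e^{2h} − 1))) tends to 0 as h → 0⁺. -/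
open Filter

private lemma slope_lim {f : ℝ → ℝ} {c : ℝ} (h0 : f 0 = 0) (h : HasDerivAt f c 0) :
    Tendsto (fun x : ℝ => f x / x) (nhdsWithin 0 (Set.Ioi 0)) (nhds c) := by
  have h1 := hasDerivAt_iff_tendsto_slope.mp h
  have h2 : Tendsto (fun x : ℝ => f x / x) (nhdsWithin 0 {(0:ℝ)}ᶜ) (nhds c) :=
    h1.congr (fun x => by simp [slope_def_field, h0])
  exact h2.mono_left (nhdsWithin_mono _ (by intro x hx; exact ne_of_gt hx))

theorem error_norm_sq_tendsto_zero (ω : ℝ) :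
    Tendsto (fun h : ℝ =>
        (1 / (4 * Real.pi ^ 2 * ω ^ 2 + 1) ^ 2) *
          (4 * Real.pi ^ 2 * ω ^ 2 + 1 -
            2 * (1 + Real.exp (2 * h) - 2 * Real.exp h * Real.cos (2 * Real.pi * ω * h))
              / (h * (Real.exp (2 * h) - 1))))
      (nhdsWithin 0 (Set.Ioi 0)) (nhds 0) := by
  set l := nhdsWithin (0:ℝ) (Set.Ioi 0)
  set C := 4 * Real.pi ^ 2 * ω ^ 2 + 1 with hC
  -- limit A : (exp h - 1)/h → 1
  have hA : Tendsto (fun h : ℝ => (Real.exp h - 1) / h) l (nhds 1) := by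
    have : HasDerivAt (fun x : ℝ => Real.exp x - 1) 1 0 := by
      simpa using (Real.hasDerivAt_exp 0).sub_const 1
    exact slope_lim (by simp) this
  -- limit A' : h/(exp h - 1) → 1
  have hA' : Tendsto (fun h : ℝ => h / (Real.exp h - 1)) l (nhds 1) := by
    have := (hA.inv₀ one_ne_zero)
    simpa [inv_div] using this
  -- limit S : sin (π ω h)/h → π ω
  have hS : Tendsto (fun h : ℝ => Real.sin (Real.pi * ω * h) / h) l (nhds (Real.pi * ω)) := by
    have hd : HasDerivAt (fun x : ℝ => Real.sin (Real.pi * ω * x)) (Real.pi * ω) 0 := by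
      have : HasDerivAt (fun x : ℝ => Real.pi * ω * x) (Real.pi * ω) 0 := by
        simpa using (hasDerivAt_id (0:ℝ)).const_mul (Real.pi * ω)
      simpa using this.sin
    exact slope_lim (by simp) hd
  -- limit B : 1/(exp h + 1) → 1/2
  have hB : Tendsto (fun h : ℝ => 1 / (Real.exp h + 1)) l (nhds (1/2)) := by
    have he : Tendsto (fun h : ℝ => Real.exp h + 1) l (nhds 2) := by
      have h1 := (Real.continuous_exp.tendsto 0).mono_left
        (nhdsWithin_le_nhds : l ≤ nhds 0)
      have h2 := h1.add (tendsto_const_nhds (x := (1:ℝ)))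
      have h3 : Real.exp 0 + 1 = 2 := by norm_num [Real.exp_zero]
      rwa [h3] at h2
    exact tendsto_const_nhds.div he two_ne_zero
  have hE : Tendsto Real.exp l (nhds 1) := by
    have := Real.continuous_exp.continuousAt (x := (0:ℝ))
    simpa [Real.exp_zero] using this.tendsto.mono_left nhdsWithin_le_nhds
  -- G
  set G : ℝ → ℝ := fun h =>
    2 * ((Real.exp h - 1) / h) * (1 / (Real.exp h + 1)) +
      8 * Real.exp h * (Real.sin (Real.pi * ω * h) / h) ^ 2 * (h / (Real.exp h - 1)) *
        (1 / (Real.exp h + 1)) with hG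
  have hGlim : Tendsto G l (nhds C) := by
    have : Tendsto G l (nhds (2 * 1 * (1/2) + 8 * 1 * (Real.pi * ω) ^ 2 * 1 * (1/2))) := by
      exact (((tendsto_const_nhds.mul hA).mul hB).add
        ((((tendsto_const_nhds.mul hE).mul (hS.pow 2)).mul hA').mul hB))
    convert this using 2
    rw [hC]; ring
  -- F = G eventually
  have hFG : ∀ᶠ h in l, 2 * (1 + Real.exp (2 * h) - 2 * Real.exp h * Real.cos (2 * Real.pi * ω * h))
      / (h * (Real.exp (2 * h) - 1)) = G h := by
    filter_upwards [self_mem_nhdsWithin] with h hh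
    have hh0 : (0:ℝ) < h := hh
    have hne : h ≠ 0 := ne_of_gt hh0
    have hexp1 : 1 < Real.exp h := by
      rw [show (1:ℝ) = Real.exp 0 by simp]
      exact Real.exp_lt_exp.mpr hh0
    have he1 : Real.exp h - 1 ≠ 0 := by linarith
    have he2 : Real.exp h + 1 ≠ 0 := by positivity
    have hexp2 : Real.exp (2 * h) = Real.exp h * Real.exp h := by
      rw [two_mul, Real.exp_add]
    have hcos : Real.cos (2 * Real.pi * ω * h) = 1 - 2 * Real.sin (Real.pi * ω * h) ^ 2 := by
      have h2 : 2 * Real.pi * ω * h = 2 * (Real.pi * ω * h) := by ring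
      rw [h2, Real.cos_two_mul]
      have hpyth := Real.sin_sq_add_cos_sq (Real.pi * ω * h)
      nlinarith [hpyth]
    have hfac : Real.exp h * Real.exp h - 1 = (Real.exp h - 1) * (Real.exp h + 1) := by ring
    rw [hG]
    rw [hexp2, hcos, hfac]
    field_simp
    ring
  have hF : Tendsto (fun h : ℝ => 2 * (1 + Real.exp (2 * h) - 2 * Real.exp h * Real.cos (2 * Real.pi * ω * h))
      / (h * (Real.exp (2 * h) - 1))) l (nhds C) :=
    hGlim.congr' (hFG.mono fun h e => e.symm)
  have hfinal : Tendsto (fun h : ℝ =>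
      (1 / C ^ 2) * (C - 2 * (1 + Real.exp (2 * h) - 2 * Real.exp h * Real.cos (2 * Real.pi * ω * h))
        / (h * (Real.exp (2 * h) - 1)))) l (nhds ((1 / C ^ 2) * (C - C))) :=
    (tendsto_const_nhds.sub hF).const_mul _
  simpa using hfinal
end
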